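/- arXiv:2010.09371 — 3 statements merged into one kernel-verified Lean document; each statement's English description precedes it below -/
import Mathlib

section
/- With the notation above, for φ₁, φ₁′, φ₂, φ₂′ ∈ ℝ, the great circles C_{φ₁}^{φ₁′} and C_{φ₂}^{φ₂′} are disjoint unless φ₁ ≡ φ₂ (mod π) or φ₁′ ≡ φ₂′ (mod π). If both congruences hold then the circles are equal; if only φ₁ ≡ φ₂ (mod π) holds then the intersection is exactly {p_{φ₁}, −p_{φ₁}}. -/
/-!
A point `a • p_φ + b • p^{φ'}` has first two coordinates `a (cos φ, sin φ)` and last two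
`b (cos φ', sin φ')`. Two lines `ℝ (cos φ₁, sin φ₁)` and `ℝ (cos φ₂, sin φ₂)` of the plane meet only
at `0` unless `φ₁ ≡ φ₂ (mod π)`, since their determinant is `sin (φ₁ - φ₂)`; this kills the
corresponding half of a common point. Conversely, shifting `φ` by `π` only changes the sign of
`p_φ`, so congruent angles span the same lines.
-/

open Real

noncomputable section

abbrev E4 := EuclideanSpace ℝ (Fin 4)

def pt (a b c d : ℝ) : E4 := WithLp.toLp 2 ![a, b, c, d]

def sphere3 : Set E4 := {x | ‖x‖ = 1}

def pLow (φ : ℝ) : E4 := pt (cos φ) (sin φ) 0 0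

def pUp (φ' : ℝ) : E4 := pt 0 0 (cos φ') (sin φ')

/-- The great circle `C_φ^{φ′} = S³ ∩ Span{p_φ, p^{φ′}}`. -/
def Cc (φ φ' : ℝ) : Set E4 :=
  sphere3 ∩ ((Submodule.span ℝ {pLow φ, pUp φ'} : Submodule ℝ E4) : Set E4)

/-- `φ ≡ ψ (mod π)`. -/
def ModPi (φ ψ : ℝ) : Prop := ∃ n : ℤ, φ - ψ = n * π

namespace ModPi

theorem refl (φ : ℝ) : ModPi φ φ := ⟨0, by simp⟩

theorem symm {φ ψ : ℝ} (h : ModPi φ ψ) : ModPi ψ φ := by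
  obtain ⟨n, hn⟩ := h
  exact ⟨-n, by push_cast; linarith⟩

theorem cos_sin_eq_or_eq_neg {φ ψ : ℝ} (h : ModPi φ ψ) :
    (cos φ = cos ψ ∧ sin φ = sin ψ) ∨ (cos φ = -cos ψ ∧ sin φ = -sin ψ) := by
  obtain ⟨n, hn⟩ := h
  rw [show φ = ψ + n * π by linarith, cos_add_int_mul_pi, sin_add_int_mul_pi]
  rcases Int.even_or_odd n with he | ho
  · simp [he.neg_one_zpow]
  · simp [ho.neg_one_zpow]

end ModPi

theorem sin_sub_ne_zero_of_not_modPi {φ ψ : ℝ} (h : ¬ ModPi φ ψ) : sin (φ - ψ) ≠ 0 := fun hz =>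
  let ⟨n, hn⟩ := Real.sin_eq_zero_iff.1 hz
  h ⟨n, hn.symm⟩

theorem eq_zero_of_smul_cos_sin_eq {φ ψ a b : ℝ} (h : ¬ ModPi φ ψ)
    (hc : a * cos φ = b * cos ψ) (hs : a * sin φ = b * sin ψ) : a = 0 ∧ b = 0 := by
  have hsin := sin_sub_ne_zero_of_not_modPi h
  have ha : a * sin (φ - ψ) = 0 := by
    rw [sin_sub]; linear_combination cos ψ * hs - sin ψ * hc
  have hb : b * sin (φ - ψ) = 0 := by
    rw [sin_sub]; linear_combination cos φ * hs - sin φ * hc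
  exact ⟨(mul_eq_zero.1 ha).resolve_right hsin, (mul_eq_zero.1 hb).resolve_right hsin⟩

theorem norm_pLow (φ : ℝ) : ‖pLow φ‖ = 1 := by
  rw [EuclideanSpace.norm_eq, Fin.sum_univ_four]
  simp [pLow, pt, cos_sq_add_sin_sq]

theorem pLow_eq_or_eq_neg_of_modPi {φ ψ : ℝ} (h : ModPi φ ψ) :
    pLow φ = pLow ψ ∨ pLow φ = -pLow ψ := by
  rcases h.cos_sin_eq_or_eq_neg with ⟨hc, hs⟩ | ⟨hc, hs⟩
  · left; simp [pLow, hc, hs]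
  · right; ext i; fin_cases i <;> simp [pLow, pt, hc, hs]

theorem pUp_eq_or_eq_neg_of_modPi {φ ψ : ℝ} (h : ModPi φ ψ) :
    pUp φ = pUp ψ ∨ pUp φ = -pUp ψ := by
  rcases h.cos_sin_eq_or_eq_neg with ⟨hc, hs⟩ | ⟨hc, hs⟩
  · left; simp [pUp, hc, hs]
  · right; ext i; fin_cases i <;> simp [pUp, pt, hc, hs]

theorem span_singleton_eq_of_eq_or_eq_neg {R M : Type*} [Ring R] [AddCommGroup M] [Module R M]
    {x y : M} (h : x = y ∨ x = -y) : R ∙ x = R ∙ y := by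
  rcases h with rfl | rfl
  · rfl
  · rw [← Set.neg_singleton, Submodule.span_neg]

theorem Cc_eq_inter_sup (φ φ' : ℝ) :
    Cc φ φ' = sphere3 ∩ ((ℝ ∙ pLow φ) ⊔ (ℝ ∙ pUp φ') : Submodule ℝ E4) := by
  rw [Cc, Submodule.span_insert]

theorem Cc_eq_of_modPi {φ₁ φ₁' φ₂ φ₂' : ℝ} (h : ModPi φ₁ φ₂) (h' : ModPi φ₁' φ₂') :
    Cc φ₁ φ₁' = Cc φ₂ φ₂' := by
  rw [Cc_eq_inter_sup, Cc_eq_inter_sup,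
    span_singleton_eq_of_eq_or_eq_neg (pLow_eq_or_eq_neg_of_modPi h),
    span_singleton_eq_of_eq_or_eq_neg (pUp_eq_or_eq_neg_of_modPi h')]

theorem mem_Cc_iff {x : E4} {φ φ' : ℝ} :
    x ∈ Cc φ φ' ↔ ‖x‖ = 1 ∧ ∃ a b : ℝ, a • pLow φ + b • pUp φ' = x := by
  simp [Cc, sphere3, Submodule.mem_span_pair]

theorem neg_mem_Cc {x : E4} {φ φ' : ℝ} (hx : x ∈ Cc φ φ') : -x ∈ Cc φ φ' :=
  ⟨(norm_neg x).trans hx.1, neg_mem hx.2⟩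

theorem pLow_mem_Cc_of_modPi {φ₁ φ₂ : ℝ} (h : ModPi φ₁ φ₂) (φ₂' : ℝ) :
    pLow φ₁ ∈ Cc φ₂ φ₂' := by
  rw [Cc_eq_of_modPi h.symm (ModPi.refl φ₂')]
  exact ⟨norm_pLow φ₁, Submodule.subset_span (Set.mem_insert _ _)⟩

theorem coeffs_eq_zero_of_smul_pLow_add_smul_pUp_eq {φ₁ φ₁' φ₂ φ₂' a₁ b₁ a₂ b₂ : ℝ}
    (e : a₁ • pLow φ₁ + b₁ • pUp φ₁' = a₂ • pLow φ₂ + b₂ • pUp φ₂') :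
    (¬ ModPi φ₁ φ₂ → a₁ = 0) ∧ (¬ ModPi φ₁' φ₂' → b₁ = 0) := by
  have h0 := congrArg (· 0) e
  have h1 := congrArg (· 1) e
  have h2 := congrArg (· 2) e
  have h3 := congrArg (· 3) e
  simp only [pLow, pUp, pt, PiLp.add_apply, PiLp.smul_apply, Matrix.cons_val_zero,
    Matrix.cons_val_one, Matrix.cons_val, smul_eq_mul, mul_zero, add_zero, zero_add] at h0 h1 h2 h3
  exact ⟨fun h => (eq_zero_of_smul_cos_sin_eq h h0 h1).1,
    fun h => (eq_zero_of_smul_cos_sin_eq h h2 h3).1⟩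

theorem exists_coeffs_of_mem_Cc_inter_Cc {x : E4} {φ₁ φ₁' φ₂ φ₂' : ℝ}
    (hx : x ∈ Cc φ₁ φ₁' ∩ Cc φ₂ φ₂') :
    ‖x‖ = 1 ∧ ∃ a b : ℝ, a • pLow φ₁ + b • pUp φ₁' = x ∧
      (¬ ModPi φ₁ φ₂ → a = 0) ∧ (¬ ModPi φ₁' φ₂' → b = 0) := by
  obtain ⟨hn, a₁, b₁, e₁⟩ := mem_Cc_iff.1 hx.1
  obtain ⟨-, a₂, b₂, e₂⟩ := mem_Cc_iff.1 hx.2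
  exact ⟨hn, a₁, b₁, e₁, coeffs_eq_zero_of_smul_pLow_add_smul_pUp_eq (e₁.trans e₂.symm)⟩

theorem eq_or_eq_neg_of_norm_smul_eq_one {V : Type*} [NormedAddCommGroup V] [NormedSpace ℝ V]
    {v : V} (hv : ‖v‖ = 1) {a : ℝ} (h : ‖a • v‖ = 1) : a • v = v ∨ a • v = -v := by
  rw [norm_smul, hv, mul_one, Real.norm_eq_abs] at h
  rcases abs_eq zero_le_one |>.1 h with rfl | rfl
  · exact .inl (one_smul ℝ v)
  · exact .inr (neg_one_smul ℝ v)

/-- The circles `C_{φ₁}^{φ₁′}` and `C_{φ₂}^{φ₂′}` are disjoint unless `φ₁ ≡ φ₂ (mod π)` or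
`φ₁′ ≡ φ₂′ (mod π)`; if both congruences hold the circles are equal; if only the first holds
the intersection is exactly `{p_{φ₁}, −p_{φ₁}}`. -/
theorem statement5 (φ₁ φ₁' φ₂ φ₂' : ℝ) :
    (¬ ModPi φ₁ φ₂ → ¬ ModPi φ₁' φ₂' → Cc φ₁ φ₁' ∩ Cc φ₂ φ₂' = ∅) ∧
    (ModPi φ₁ φ₂ → ModPi φ₁' φ₂' → Cc φ₁ φ₁' = Cc φ₂ φ₂') ∧
    (ModPi φ₁ φ₂ → ¬ ModPi φ₁' φ₂' →
      Cc φ₁ φ₁' ∩ Cc φ₂ φ₂' = {pLow φ₁, -pLow φ₁}) := by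
  refine ⟨fun h h' => ?_, Cc_eq_of_modPi, fun h h' => ?_⟩
  · refine Set.eq_empty_of_forall_notMem fun x hx => ?_
    obtain ⟨hn, a, b, rfl, ha, hb⟩ := exists_coeffs_of_mem_Cc_inter_Cc hx
    simp [ha h, hb h'] at hn
  · ext x
    constructor
    · intro hx
      obtain ⟨hn, a, b, rfl, -, hb⟩ := exists_coeffs_of_mem_Cc_inter_Cc hx
      rw [hb h', zero_smul, add_zero] at hn ⊢
      exact eq_or_eq_neg_of_norm_smul_eq_one (norm_pLow φ₁) hn
    · have hp : pLow φ₁ ∈ Cc φ₁ φ₁' ∩ Cc φ₂ φ₂' :=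
        ⟨pLow_mem_Cc_of_modPi (ModPi.refl φ₁) φ₁', pLow_mem_Cc_of_modPi h φ₂'⟩
      rintro (rfl | rfl)
      · exact hp
      · exact ⟨neg_mem_Cc hp.1, neg_mem_Cc hp.2⟩

end
end

section
/- Let C, C^⊥, R_t be as above and let p₀ = (1,0,0,0) ∈ C. Let H = C^⊥ ⋈ p₀ be the closed hemisphere {x ∈ S³ : x₁ ≥ 0, x₂ = 0} (the union of minimizing geodesics from points of C^⊥ to p₀). Then for every p ∈ S³ the orbit {R_t p : t ∈ ℝ} intersects H in exactly one point, and when p ∉ C^⊥ this intersection is transverse (the orbit velocity at the intersection point is not tangent to H). -/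
/-!
`R_t` rotates the `(x₁,x₂)`-plane and fixes `(x₃,x₄)`, so the orbit of `p` is the circle of
radius `r = √(p₁² + p₂²)` through `p` in that plane. It meets the half-plane `{x₁ ≥ 0, x₂ = 0}`
only at `(r, 0, p₃, p₄)`, where the orbit velocity is `(0, r, 0, 0)`; this vanishes only when
`r = 0`, i.e. when `p ∈ C^⊥`.
-/

open Real

noncomputable section

/-- The great circle `C^⊥ = {(0, 0, cos t, sin t)}`. -/
def Cperp : Set E4 := {x | ∃ t : ℝ, x = pt 0 0 (cos t) (sin t)}

/-- Rotation by angle `t` of the `(x₁,x₂)`-coordinates, fixing `(x₃,x₄)`. -/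
def Rot (t : ℝ) (x : E4) : E4 :=
  pt (x 0 * cos t - x 1 * sin t) (x 0 * sin t + x 1 * cos t) (x 2) (x 3)

/-- The closed hemisphere `H = C^⊥ ⋈ p₀ = {x ∈ S³ : x₁ ≥ 0, x₂ = 0}`. -/
def Hemi : Set E4 := {x | ‖x‖ = 1 ∧ 0 ≤ x 0 ∧ x 1 = 0}

/-- The velocity (Killing) vector of the rotation family at `x`:
`(d/dt)|₀ R_t x = (−x₂, x₁, 0, 0)`. -/
def vel (x : E4) : E4 := pt (-(x 1)) (x 0) 0 0

theorem exists_polar_coords (a b : ℝ) :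
    ∃ θ : ℝ, a = √(a ^ 2 + b ^ 2) * cos θ ∧ b = √(a ^ 2 + b ^ 2) * sin θ := by
  have hnorm : ‖(⟨a, b⟩ : ℂ)‖ = √(a ^ 2 + b ^ 2) := by
    rw [Complex.norm_def, Complex.normSq_mk]; ring_nf
  refine ⟨Complex.arg ⟨a, b⟩, ?_, ?_⟩
  · rw [← hnorm, Complex.norm_mul_cos_arg]
  · rw [← hnorm, Complex.norm_mul_sin_arg]

@[simp] lemma pt_apply_zero (a b c d : ℝ) : pt a b c d 0 = a := rfl
@[simp] lemma pt_apply_one (a b c d : ℝ) : pt a b c d 1 = b := rfl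
@[simp] lemma pt_apply_two (a b c d : ℝ) : pt a b c d 2 = c := rfl
@[simp] lemma pt_apply_three (a b c d : ℝ) : pt a b c d 3 = d := rfl

lemma E4.ext_coords {x y : E4} (h0 : x 0 = y 0) (h1 : x 1 = y 1) (h2 : x 2 = y 2)
    (h3 : x 3 = y 3) : x = y := by
  ext i
  fin_cases i <;> assumption

lemma E4.norm_sq (x : E4) : ‖x‖ ^ 2 = x 0 ^ 2 + x 1 ^ 2 + x 2 ^ 2 + x 3 ^ 2 := by
  simp [EuclideanSpace.real_norm_sq_eq, Fin.sum_univ_four]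

lemma Rot_apply_sq_add_sq (t : ℝ) (x : E4) :
    Rot t x 0 ^ 2 + Rot t x 1 ^ 2 = x 0 ^ 2 + x 1 ^ 2 := by
  simp only [Rot, pt_apply_zero, pt_apply_one]
  linear_combination (x 0 ^ 2 + x 1 ^ 2) * sin_sq_add_cos_sq t

def hemiPoint (x : E4) : E4 := pt √(x 0 ^ 2 + x 1 ^ 2) 0 (x 2) (x 3)

lemma hemiPoint_mem_Hemi {x : E4} (hx : x ∈ sphere3) : hemiPoint x ∈ Hemi := by
  refine ⟨?_, sqrt_nonneg _, rfl⟩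
  have hsq : ‖hemiPoint x‖ ^ 2 = ‖x‖ ^ 2 := by
    simp only [E4.norm_sq, hemiPoint, pt_apply_zero, pt_apply_one, pt_apply_two, pt_apply_three,
      sq_sqrt (by positivity : 0 ≤ x 0 ^ 2 + x 1 ^ 2)]
    ring
  rw [← hx, ← sq_eq_sq₀ (norm_nonneg _) (norm_nonneg _), hsq]

lemma exists_Rot_eq_hemiPoint (x : E4) : ∃ t : ℝ, Rot t x = hemiPoint x := by
  obtain ⟨θ, ha, hb⟩ := exists_polar_coords (x 0) (x 1)
  refine ⟨-θ, E4.ext_coords ?_ ?_ rfl rfl⟩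
  · simp only [Rot, hemiPoint, pt_apply_zero, cos_neg, sin_neg]
    linear_combination cos θ * ha + sin θ * hb + √(x 0 ^ 2 + x 1 ^ 2) * sin_sq_add_cos_sq θ
  · simp only [Rot, hemiPoint, pt_apply_one, cos_neg, sin_neg]
    linear_combination (-sin θ) * ha + cos θ * hb

lemma Rot_eq_hemiPoint_of_mem_Hemi {t : ℝ} {x : E4} (h : Rot t x ∈ Hemi) :
    Rot t x = hemiPoint x := by
  obtain ⟨-, h0, h1⟩ := h
  have hsq := Rot_apply_sq_add_sq t x
  rw [h1, zero_pow two_ne_zero, add_zero] at hsq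
  refine E4.ext_coords ?_ h1 rfl rfl
  rw [hemiPoint, pt_apply_zero, ← hsq, sqrt_sq h0]

lemma mem_Cperp_of_hemiPoint_apply_zero {x : E4} (hx : x ∈ sphere3) (h : hemiPoint x 0 = 0) :
    x ∈ Cperp := by
  have h01 : x 0 ^ 2 + x 1 ^ 2 = 0 := (sqrt_eq_zero (by positivity)).mp h
  have h0 : x 0 = 0 := by nlinarith
  have h1 : x 1 = 0 := by nlinarith
  have h23 : x 2 ^ 2 + x 3 ^ 2 = 1 := by
    have := E4.norm_sq x
    rw [show ‖x‖ = 1 from hx] at this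
    linarith
  obtain ⟨θ, hc, hs⟩ := exists_polar_coords (x 2) (x 3)
  rw [h23, sqrt_one, one_mul] at hc hs
  exact ⟨θ, E4.ext_coords h0 h1 hc hs⟩

/-- Every orbit `{R_t p}` meets the closed hemisphere `H` in exactly one point; if moreover
`p ∉ C^⊥` the intersection is transverse: the orbit velocity at the intersection point is not
tangent to `H` (the hemisphere `H` lies in the hyperplane `{x₂ = 0}`, so tangency would force
the second component of the velocity to vanish). -/
theorem statement7 (p : E4) (hp : p ∈ sphere3) :
    (∃! x : E4, x ∈ Hemi ∧ ∃ t : ℝ, Rot t p = x) ∧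
    (p ∉ Cperp → ∀ x ∈ Hemi, (∃ t : ℝ, Rot t p = x) → (vel x) 1 ≠ 0) := by
  have hunique : ∀ x ∈ Hemi, (∃ t : ℝ, Rot t p = x) → x = hemiPoint p := by
    rintro x hx ⟨t, rfl⟩
    exact Rot_eq_hemiPoint_of_mem_Hemi hx
  refine ⟨⟨hemiPoint p, ⟨hemiPoint_mem_Hemi hp, exists_Rot_eq_hemiPoint p⟩,
    fun x hx => hunique x hx.1 hx.2⟩, ?_⟩
  intro hpC x hx horbit hvel
  rw [hunique x hx horbit] at hvel
  exact hpC (mem_Cperp_of_hemiPoint_apply_zero hp hvel)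

end
end

section
/- Fix integers m, k ≥ 2. The collection Ω := {Ω_i^j : i, j ∈ ℤ}, where Ω_i^j is the spherical tetrahedron with vertices t_{i−1/2}, t_{i+1/2}, t^{j−1/2}, t^{j+1/2}, covers S³: every point of S³ lies in some Ω_i^j with 0 ≤ i < 2m and 0 ≤ j < 2k, and moreover any two distinct such tetrahedra have disjoint interiors. In particular S³ is tessellated by 4km tetrahedra. -/
open Real

noncomputable section

def tLow (m : ℕ) (i : ℝ) : E4 := pt (cos (i * π / m)) (sin (i * π / m)) 0 0

def tUp (k : ℕ) (j : ℝ) : E4 := pt 0 0 (cos (j * π / k)) (sin (j * π / k))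

/-- The vertices of the spherical tetrahedron `Ω_i^j`:
`t_{i−1/2}, t_{i+1/2}, t^{j−1/2}, t^{j+1/2}`. -/
def vertOm (m k : ℕ) (i j : ℤ) : Fin 4 → E4 :=
  ![tLow m ((i : ℝ) - 1/2), tLow m ((i : ℝ) + 1/2),
    tUp k ((j : ℝ) - 1/2), tUp k ((j : ℝ) + 1/2)]

/-- The spherical tetrahedron `Ω_i^j`. -/
def Om (m k : ℕ) (i j : ℤ) : Set E4 :=
  {u | ‖u‖ = 1 ∧ ∃ c : Fin 4 → ℝ, (∀ a, 0 ≤ c a) ∧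
    ∃ r : ℝ, 0 < r ∧ r • u = ∑ a, c a • vertOm m k i j a}

/-- The (open) interior of `Ω_i^j`: points where all four coefficients are strictly
positive. -/
def OmInt (m k : ℕ) (i j : ℤ) : Set E4 :=
  {u | ‖u‖ = 1 ∧ ∃ c : Fin 4 → ℝ, (∀ a, 0 < c a) ∧
    ∃ r : ℝ, 0 < r ∧ r • u = ∑ a, c a • vertOm m k i j a}

/-!
Split a point of `S³` as `(z, w) ∈ ℂ × ℂ`. The vertices `t_a` live in the first factor and the
`t^b` in the second, so membership in `Ω_i^j` splits into two planar conditions: `z` lies in the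
sector between the rays at angles `(i ∓ 1/2)π/m`, and `w` likewise for `k`. These sectors have
opening `π/m < π`; they cover the plane (take `i = round (m · arg z / π)`, reduced mod `2m`), and a
point with positive coefficients in sector `i` has its argument strictly inside that sector, which
determines `i` modulo `2m`.
-/

open Complex (arg)

theorem sin_sub_mul_cos_add_sin_sub_mul_cos (A B θ : ℝ) :
    sin (B - θ) * cos A + sin (θ - A) * cos B = sin (B - A) * cos θ := by
  simp only [sin_sub]; ring

theorem sin_sub_mul_sin_add_sin_sub_mul_sin (A B θ : ℝ) :
    sin (B - θ) * sin A + sin (θ - A) * sin B = sin (B - A) * sin θ := by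
  simp only [sin_sub]; ring

theorem exists_nonneg_combination_of_le_of_le {A B θ : ℝ} (hA : A ≤ θ) (hB : θ ≤ B)
    (hAB : 0 < B - A) (hBA : B - A < π) :
    ∃ c₀ c₁ : ℝ, 0 ≤ c₀ ∧ 0 ≤ c₁ ∧
      cos θ = c₀ * cos A + c₁ * cos B ∧ sin θ = c₀ * sin A + c₁ * sin B := by
  have hs : 0 < sin (B - A) := sin_pos_of_pos_of_lt_pi hAB hBA
  refine ⟨sin (B - θ) / sin (B - A), sin (θ - A) / sin (B - A),
    div_nonneg (sin_nonneg_of_nonneg_of_le_pi (by linarith) (by linarith)) hs.le,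
    div_nonneg (sin_nonneg_of_nonneg_of_le_pi (by linarith) (by linarith)) hs.le, ?_, ?_⟩
  · rw [div_mul_eq_mul_div, div_mul_eq_mul_div, ← add_div, eq_div_iff hs.ne',
      sin_sub_mul_cos_add_sin_sub_mul_cos, mul_comm]
  · rw [div_mul_eq_mul_div, div_mul_eq_mul_div, ← add_div, eq_div_iff hs.ne',
      sin_sub_mul_sin_add_sin_sub_mul_sin, mul_comm]

theorem sin_sub_pos_and_sin_sub_neg_of_combination {A B θ ρ c₀ c₁ : ℝ} (hρ : 0 ≤ ρ)
    (hc₀ : 0 < c₀) (hc₁ : 0 < c₁) (hAB : 0 < sin (B - A))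
    (hx : ρ * cos θ = c₀ * cos A + c₁ * cos B) (hy : ρ * sin θ = c₀ * sin A + c₁ * sin B) :
    0 < sin (θ - A) ∧ sin (θ - B) < 0 := by
  have hA : ρ * sin (θ - A) = c₁ * sin (B - A) := by
    simp only [sin_sub]; linear_combination cos A * hy - sin A * hx
  have hB : ρ * -sin (θ - B) = c₀ * sin (B - A) := by
    simp only [sin_sub]; linear_combination sin B * hx - cos B * hy
  exact ⟨pos_of_mul_pos_right (hA ▸ mul_pos hc₁ hAB) hρ,
    neg_pos.mp (pos_of_mul_pos_right (hB ▸ mul_pos hc₀ hAB) hρ)⟩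

theorem exists_int_mul_two_pi_lt_of_sin_pos {s δ : ℝ} (hδ : 0 ≤ δ) (h₁ : 0 < sin s)
    (h₂ : sin (s - δ) < 0) : ∃ n : ℤ, n * (2 * π) < s ∧ s < n * (2 * π) + δ := by
  obtain ⟨h0, h2π⟩ := toIcoMod_mem_Ico' two_pi_pos s
  set n := toIcoDiv two_pi_pos 0 s
  set s' := toIcoMod two_pi_pos 0 s
  have hs' : s' = s - n * (2 * π) := by
    rw [← self_sub_toIcoMod_eq_mul two_pi_pos 0 s]; ring
  rw [← sin_sub_int_mul_two_pi s n, ← hs'] at h₁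
  rw [← sin_sub_int_mul_two_pi _ n, sub_right_comm, ← hs'] at h₂
  have hπ : s' < π := by
    by_contra! h
    have := sin_nonneg_of_nonneg_of_le_pi (x := s' - π) (by linarith) (by linarith)
    rw [sin_sub_pi] at this
    linarith
  have hpos : 0 < s' := h0.lt_of_ne (by rintro h; rw [← h, sin_zero] at h₁; exact h₁.false)
  have hlt : s' < δ := by
    by_contra! h
    linarith [sin_nonneg_of_nonneg_of_le_pi (x := s' - δ) (by linarith) (by linarith)]
  exact ⟨n, by linarith, by linarith⟩

theorem round_mul_div_pi_eq {N : ℕ} (hN : 0 < N) {θ : ℝ} {i n : ℤ}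
    (h₁ : (i - 1 / 2) * π / N < θ - n * (2 * π)) (h₂ : θ - n * (2 * π) < (i + 1 / 2) * π / N) :
    round (θ * N / π) = i + 2 * N * n := by
  have hN' : (0 : ℝ) < N := by exact_mod_cast hN
  rw [round_eq, Int.floor_eq_iff]
  rw [div_lt_iff₀ hN'] at h₁
  rw [lt_div_iff₀ hN'] at h₂
  push_cast
  constructor
  · rw [← sub_le_iff_le_add, le_div_iff₀ pi_pos]; nlinarith [pi_pos]
  · rw [← lt_sub_iff_add_lt, div_lt_iff₀ pi_pos]; nlinarith [pi_pos]

theorem modEq_round_of_combination {N : ℕ} (hN : 2 ≤ N) {x y r c₀ c₁ : ℝ} {i : ℤ} (hr : 0 ≤ r)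
    (hc₀ : 0 < c₀) (hc₁ : 0 < c₁)
    (hx : r * x = c₀ * cos ((i - 1 / 2) * π / N) + c₁ * cos ((i + 1 / 2) * π / N))
    (hy : r * y = c₀ * sin ((i - 1 / 2) * π / N) + c₁ * sin ((i + 1 / 2) * π / N)) :
    i ≡ round (arg ⟨x, y⟩ * N / π) [ZMOD 2 * N] := by
  have hN' : (1 : ℝ) < N := by exact_mod_cast hN
  have hδ : (i + 1 / 2) * π / N - (i - 1 / 2) * π / N = π / N := by ring
  have hsin : 0 < sin ((i + 1 / 2) * π / N - (i - 1 / 2) * π / N) := by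
    rw [hδ]; exact sin_pos_of_pos_of_lt_pi (by positivity) (div_lt_self pi_pos hN')
  obtain ⟨hA, hB⟩ := sin_sub_pos_and_sin_sub_neg_of_combination
    (mul_nonneg hr (norm_nonneg (⟨x, y⟩ : ℂ))) hc₀ hc₁ hsin
    (by rw [mul_assoc, Complex.norm_mul_cos_arg]; exact hx)
    (by rw [mul_assoc, Complex.norm_mul_sin_arg]; exact hy)
  obtain ⟨n, h₁, h₂⟩ := exists_int_mul_two_pi_lt_of_sin_pos (δ := π / N) (by positivity) hA
    (by convert hB using 2; ring)
  have hround : round (arg ⟨x, y⟩ * N / π) = i + 2 * N * n :=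
    round_mul_div_pi_eq (by omega) (by linarith) (by linarith)
  exact hround ▸ Int.modEq_add_fac_self.symm

theorem exists_sector_combination {N : ℕ} (hN : 2 ≤ N) (x y : ℝ) :
    ∃ i : ℤ, 0 ≤ i ∧ i < 2 * N ∧ ∃ c₀ c₁ : ℝ, 0 ≤ c₀ ∧ 0 ≤ c₁ ∧
      x = c₀ * cos ((i - 1 / 2) * π / N) + c₁ * cos ((i + 1 / 2) * π / N) ∧
      y = c₀ * sin ((i - 1 / 2) * π / N) + c₁ * sin ((i + 1 / 2) * π / N) := by
  have hN' : (1 : ℝ) < N := by exact_mod_cast hN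
  have h2N : (0 : ℤ) < 2 * N := by omega
  set z : ℂ := ⟨x, y⟩
  set i₀ := round (arg z * N / π)
  set i := i₀ % (2 * N)
  set q := i₀ / (2 * N)
  have hi₀ : (i₀ : ℝ) = i + 2 * N * q := by exact_mod_cast (Int.emod_add_mul_ediv i₀ (2 * N)).symm
  have hshift : (i : ℝ) * π / N = i₀ * π / N - q * (2 * π) := by
    rw [hi₀]; field_simp; ring
  have hround : |arg z - i₀ * π / N| ≤ 1 / 2 * (π / N) := by
    rw [show arg z - i₀ * π / N = (arg z * N / π - i₀) * (π / N) by field_simp,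
      abs_mul, abs_of_pos (by positivity : 0 < π / N)]
    exact mul_le_mul_of_nonneg_right (abs_sub_round _) (by positivity)
  obtain ⟨hlo, hhi⟩ := abs_le.mp hround
  have hA : (i - 1 / 2) * π / N ≤ arg z - q * (2 * π) := by
    linear_combination hlo + hshift
  have hB : arg z - q * (2 * π) ≤ (i + 1 / 2) * π / N := by
    linear_combination hhi - hshift
  have hδ : (i + 1 / 2) * π / N - (i - 1 / 2) * π / N = π / N := by ring
  obtain ⟨c₀, c₁, hc₀, hc₁, hcos, hsin⟩ := exists_nonneg_combination_of_le_of_le hA hB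
    (by rw [hδ]; positivity) (by rw [hδ]; exact div_lt_self pi_pos hN')
  refine ⟨i, Int.emod_nonneg _ h2N.ne', Int.emod_lt_of_pos _ h2N, ‖z‖ * c₀, ‖z‖ * c₁,
    mul_nonneg (norm_nonneg z) hc₀, mul_nonneg (norm_nonneg z) hc₁, ?_, ?_⟩
  · rw [cos_sub_int_mul_two_pi] at hcos
    linear_combination -(Complex.norm_mul_cos_arg z) + ‖z‖ * hcos
  · rw [sin_sub_int_mul_two_pi] at hsin
    linear_combination -(Complex.norm_mul_sin_arg z) + ‖z‖ * hsin

theorem eq_pt_iff {u : E4} {a b c d : ℝ} :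
    u = pt a b c d ↔ u 0 = a ∧ u 1 = b ∧ u 2 = c ∧ u 3 = d := by
  constructor
  · rintro rfl; simp [pt]
  · rintro ⟨rfl, rfl, rfl, rfl⟩
    ext a; fin_cases a <;> rfl

theorem sum_smul_vertOm (m k : ℕ) (i j : ℤ) (c : Fin 4 → ℝ) :
    ∑ a, c a • vertOm m k i j a =
      pt (c 0 * cos ((i - 1 / 2) * π / m) + c 1 * cos ((i + 1 / 2) * π / m))
        (c 0 * sin ((i - 1 / 2) * π / m) + c 1 * sin ((i + 1 / 2) * π / m))
        (c 2 * cos ((j - 1 / 2) * π / k) + c 3 * cos ((j + 1 / 2) * π / k))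
        (c 2 * sin ((j - 1 / 2) * π / k) + c 3 * sin ((j + 1 / 2) * π / k)) := by
  ext a; fin_cases a <;> simp [Fin.sum_univ_four, vertOm, tLow, tUp, pt]

theorem modEq_round_of_mem_OmInt {m k : ℕ} (hm : 2 ≤ m) (hk : 2 ≤ k) {i j : ℤ} {u : E4}
    (hu : u ∈ OmInt m k i j) :
    i ≡ round (arg ⟨u 0, u 1⟩ * m / π) [ZMOD 2 * m] ∧
      j ≡ round (arg ⟨u 2, u 3⟩ * k / π) [ZMOD 2 * k] := by
  obtain ⟨-, c, hc, r, hr, h⟩ := hu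
  rw [sum_smul_vertOm, eq_pt_iff] at h
  simp only [PiLp.smul_apply, smul_eq_mul] at h
  obtain ⟨h0, h1, h2, h3⟩ := h
  exact ⟨modEq_round_of_combination hm hr.le (hc 0) (hc 1) h0 h1,
    modEq_round_of_combination hk hr.le (hc 2) (hc 3) h2 h3⟩

/-- The `4km` tetrahedra `Ω_i^j`, `0 ≤ i < 2m`, `0 ≤ j < 2k`, tessellate `S³`: they cover
`S³` and distinct ones have disjoint interiors. -/
theorem statement13 (m k : ℕ) (hm : 2 ≤ m) (hk : 2 ≤ k) :
    (∀ x ∈ sphere3, ∃ i j : ℤ, 0 ≤ i ∧ i < 2 * m ∧ 0 ≤ j ∧ j < 2 * k ∧ x ∈ Om m k i j) ∧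
    (∀ i j i' j' : ℤ, 0 ≤ i → i < 2 * m → 0 ≤ j → j < 2 * k →
      0 ≤ i' → i' < 2 * m → 0 ≤ j' → j' < 2 * k → (i, j) ≠ (i', j') →
      OmInt m k i j ∩ OmInt m k i' j' = ∅) := by
  constructor
  · intro x hx
    obtain ⟨i, hi₀, hi, c₀, c₁, hc₀, hc₁, h0, h1⟩ := exists_sector_combination hm (x 0) (x 1)
    obtain ⟨j, hj₀, hj, d₀, d₁, hd₀, hd₁, h2, h3⟩ := exists_sector_combination hk (x 2) (x 3)
    refine ⟨i, j, hi₀, hi, hj₀, hj, hx, ![c₀, c₁, d₀, d₁], ?_, 1, one_pos, ?_⟩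
    · intro a; fin_cases a <;> assumption
    · rw [one_smul, sum_smul_vertOm, eq_pt_iff]
      exact ⟨h0, h1, h2, h3⟩
  · intro i j i' j' hi₀ hi hj₀ hj hi₀' hi' hj₀' hj' hne
    refine Set.eq_empty_of_forall_notMem fun u ⟨hu, hu'⟩ => hne ?_
    obtain ⟨hiu, hju⟩ := modEq_round_of_mem_OmInt hm hk hu
    obtain ⟨hiu', hju'⟩ := modEq_round_of_mem_OmInt hm hk hu'
    have hii := hiu.trans hiu'.symm
    have hjj := hju.trans hju'.symm
    rw [Int.ModEq, Int.emod_eq_of_lt hi₀ hi, Int.emod_eq_of_lt hi₀' hi'] at hii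
    rw [Int.ModEq, Int.emod_eq_of_lt hj₀ hj, Int.emod_eq_of_lt hj₀' hj'] at hjj
    rw [hii, hjj]

end
end
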